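/- In the weighted colored-graph scheme, playing a blue vertex v whose every neighbor in the residual graph is white or green decreases the total weight by at least 3: v itself drops from weight 1 to weight 0 and each neighbor's weight drops by at least 2 (white 3 → blue/red ≤ 1, green 2 → red 0). -/

import Mathlib

open SimpleGraph Finset

inductive GameColor | white | green | blue | red
deriving DecidableEq

def GameColor.weight : GameColor → ℕ
  | white => 3
  | green => 2
  | blue => 1
  | red => 0

variable {V : Type} [Fintype V] [DecidableEq V]

/-- The set of vertices totally dominated by the played set `D`. -/
def totDom (G : SimpleGraph V) [DecidableRel G.Adj] (D : Finset V) : Finset V :=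
  Finset.univ.filter fun u => ∃ v ∈ D, G.Adj u v

/-- A vertex `v` is a legal move if playing it totally dominates a new vertex. -/
def isLegal (G : SimpleGraph V) [DecidableRel G.Adj] (D : Finset V) (v : V) : Prop :=
  ∃ u, G.Adj v u ∧ u ∉ totDom G D

instance (G : SimpleGraph V) [DecidableRel G.Adj] (D : Finset V) :
    DecidablePred (isLegal G D) := fun v =>
  decidable_of_iff (∃ u, G.Adj v u ∧ u ∉ totDom G D) Iff.rfl

/-- The color of a vertex in the partially total dominated graph with played set `D`. -/
def colorOf (G : SimpleGraph V) [DecidableRel G.Adj] (D : Finset V) (v : V) : GameColor :=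
  if v ∈ totDom G D then
    (if isLegal G D v then .blue else .red)
  else (if v ∈ D then .green else .white)

/-- The total weight of the colored graph. -/
def totalWeight (G : SimpleGraph V) [DecidableRel G.Adj] (D : Finset V) : ℕ :=
  ∑ v, (colorOf G D v).weight

/-- The residualGraph graph: delete red vertices and blue–blue edges. -/
def residualGraph (G : SimpleGraph V) [DecidableRel G.Adj] (D : Finset V) : SimpleGraph V where
  Adj u w := G.Adj u w ∧ colorOf G D u ≠ .red ∧ colorOf G D w ≠ .red ∧
      ¬(colorOf G D u = .blue ∧ colorOf G D w = .blue)
  symm := ⟨fun u w ⟨h, a, b, c⟩ => ⟨h.symm, b, a, fun ⟨x, y⟩ => c ⟨y, x⟩⟩⟩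
  loopless := ⟨fun u ⟨h, _⟩ => G.loopless.irrefl u h⟩

instance (G : SimpleGraph V) [DecidableRel G.Adj] (D : Finset V) :
    DecidableRel (residualGraph G D).Adj := fun u w =>
  decidable_of_iff (G.Adj u w ∧ colorOf G D u ≠ .red ∧ colorOf G D w ≠ .red ∧
      ¬(colorOf G D u = .blue ∧ colorOf G D w = .blue)) Iff.rfl

def legalMoves (G : SimpleGraph V) [DecidableRel G.Adj] (D : Finset V) : Finset V :=
  Finset.univ.filter (isLegal G D)

/-- The value of the total domination game from position `D` with `fuel` moves allowed,
where `isDom = true` when it is Dominator's turn (Dominator minimizes, Staller maximizes).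
Since each legal move totally dominates a new vertex, fuel `Fintype.card V` always suffices. -/
def gameVal (G : SimpleGraph V) [DecidableRel G.Adj] : Bool → ℕ → Finset V → ℕ
  | _, 0, _ => 0
  | isDom, n + 1, D =>
    if h : (legalMoves G D).Nonempty then
      if isDom then 1 + (legalMoves G D).inf' h fun v => gameVal G false n (insert v D)
      else 1 + (legalMoves G D).sup' h fun v => gameVal G true n (insert v D)
    else 0

/-- The game total domination number `γ_tg(G)`: Dominator starts, both play optimally. -/
def gtd (G : SimpleGraph V) [DecidableRel G.Adj] : ℕ :=
  gameVal G true (Fintype.card V) ∅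

theorem Finset.sum_add_add_le_sum {ι M : Type*} [DecidableEq ι] [AddCommMonoid M]
    [PartialOrder M] [IsOrderedAddMonoid M] {s : Finset ι} {f g : ι → M}
    (hfg : ∀ k ∈ s, f k ≤ g k) {i j : ι} (hi : i ∈ s) (hj : j ∈ s) (hij : i ≠ j) {a b : M}
    (ha : f i + a ≤ g i) (hb : f j + b ≤ g j) :
    ∑ k ∈ s, f k + (a + b) ≤ ∑ k ∈ s, g k := by
  have hsub : {i, j} ⊆ s := Finset.insert_subset hi (Finset.singleton_subset_iff.2 hj)
  rw [← Finset.sum_sdiff hsub (f := f), ← Finset.sum_sdiff hsub (f := g),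
    Finset.sum_pair hij, Finset.sum_pair hij, add_assoc, add_add_add_comm]
  exact add_le_add (Finset.sum_le_sum fun k hk => hfg k (Finset.sdiff_subset hk))
    (add_le_add ha hb)

section Coloring

variable (G : SimpleGraph V) [DecidableRel G.Adj] {D D' : Finset V} {u : V}

theorem mem_totDom : u ∈ totDom G D ↔ ∃ w ∈ D, G.Adj u w := by
  simp [totDom]

theorem totDom_mono (h : D ⊆ D') : totDom G D ⊆ totDom G D' := fun _ hu =>
  let ⟨w, hw, hadj⟩ := (mem_totDom G).1 hu
  (mem_totDom G).2 ⟨w, h hw, hadj⟩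

theorem isLegal_of_subset (h : D ⊆ D') : isLegal G D' u → isLegal G D u :=
  fun ⟨w, hadj, hw⟩ => ⟨w, hadj, fun hw' => hw (totDom_mono G h hw')⟩

theorem not_isLegal_of_mem (h : u ∈ D) : ¬isLegal G D u := fun ⟨_, hadj, hw⟩ =>
  hw ((mem_totDom G).2 ⟨u, h, hadj.symm⟩)

theorem colorOf_eq_blue_iff : colorOf G D u = .blue ↔ u ∈ totDom G D ∧ isLegal G D u := by
  unfold colorOf
  split_ifs <;> simp_all

theorem colorOf_eq_white_or_green_iff :
    colorOf G D u = .white ∨ colorOf G D u = .green ↔ u ∉ totDom G D := by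
  unfold colorOf
  split_ifs <;> simp_all

theorem colorOf_eq_red_of_mem (hD : u ∈ D) (hdom : u ∈ totDom G D) :
    colorOf G D u = .red := by
  simp [colorOf, hdom, not_isLegal_of_mem G hD]

theorem weight_colorOf_le_of_subset (h : D ⊆ D') (u : V) :
    (colorOf G D' u).weight ≤ (colorOf G D u).weight := by
  have hdom := @totDom_mono _ _ _ G _ _ _ h u
  have hlegal := @isLegal_of_subset _ _ _ G _ _ _ u h
  have hmem : u ∈ D → u ∈ D' := @h u
  have hnot := @not_isLegal_of_mem _ _ _ G _ D' u
  unfold colorOf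
  split_ifs <;> simp_all [GameColor.weight]

/-- A vertex that becomes totally dominated was white or green and becomes blue or red. -/
theorem weight_colorOf_add_two_le (h : D ⊆ D') (hu : u ∉ totDom G D) (hu' : u ∈ totDom G D') :
    (colorOf G D' u).weight + 2 ≤ (colorOf G D u).weight := by
  have hmem : u ∈ D → u ∈ D' := @h u
  have hnot := @not_isLegal_of_mem _ _ _ G _ D' u
  unfold colorOf
  split_ifs <;> simp_all [GameColor.weight]

end Coloring

/-- Playing a blue vertex `v` all of whose neighbors in the residual graph are
white or green decreases the total weight by at least 3: `v` drops from weight 1 to 0 and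
each residual neighbor's weight drops by at least 2. -/
theorem stmt2 (G : SimpleGraph V) [DecidableRel G.Adj] (D : Finset V) (v : V)
    (hv : colorOf G D v = .blue)
    (hnbr : ∀ u, (residualGraph G D).Adj v u →
      colorOf G D u = .white ∨ colorOf G D u = .green) :
    totalWeight G (insert v D) + 3 ≤ totalWeight G D ∧
    colorOf G (insert v D) v = .red ∧
    ∀ u, (residualGraph G D).Adj v u →
      (colorOf G (insert v D) u).weight + 2 ≤ (colorOf G D u).weight := by
  obtain ⟨hvdom, u, hvu, hu⟩ := (colorOf_eq_blue_iff G).1 hv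
  have hsub : D ⊆ insert v D := Finset.subset_insert v D
  have hdrop : ∀ w, G.Adj v w → w ∉ totDom G D →
      (colorOf G (insert v D) w).weight + 2 ≤ (colorOf G D w).weight := fun w hvw hw =>
    weight_colorOf_add_two_le G hsub hw
      ((mem_totDom G).2 ⟨v, Finset.mem_insert_self v D, hvw.symm⟩)
  have hvred : colorOf G (insert v D) v = .red :=
    colorOf_eq_red_of_mem G (Finset.mem_insert_self v D) (totDom_mono G hsub hvdom)
  refine ⟨?_, hvred, fun w hw => hdrop w hw.1 ((colorOf_eq_white_or_green_iff G).1 (hnbr w hw))⟩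
  have hvdrop : (colorOf G (insert v D) v).weight + 1 ≤ (colorOf G D v).weight := by
    rw [hv, hvred]
    rfl
  exact Finset.sum_add_add_le_sum (fun w _ => weight_colorOf_le_of_subset G hsub w)
    (Finset.mem_univ v) (Finset.mem_univ u) (G.ne_of_adj hvu) hvdrop (hdrop u hvu hu)
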